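/- arXiv:1107.0344 — 8 statements merged into one kernel-verified Lean document; each statement's English description precedes it below -/
import Mathlib

section
/- Let J ⊆ I be an interval with 0 ∈ J and let f : ℝ → ℝ. Suppose f is differentiable at 0 with f′(0) = 0, and suppose that for every t ∈ J with t ≠ 0 one has (f(q·t^n) − f(t))/(q·t^n − t) = 0 (i.e., D_{n,q} f(t) = 0 on J). Then f is constant on J. -/
open Filter
open scoped Classical

noncomputable section

/-- `[k]_n = ∑_{i=0}^{k-1} n^i` (so `[0]_n = 0`). -/
def nbr (n k : ℕ) : ℕ := ∑ i ∈ Finset.range k, n ^ i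

/-- `h(t) = q·t^n`. -/
def hfun (q : ℝ) (n : ℕ) (t : ℝ) : ℝ := q * t ^ n

/-- `θ = q^(1/(1-n))` (meaningful for `n ≥ 3`). -/
def theta (q : ℝ) (n : ℕ) : ℝ := q ^ ((1 : ℝ) / (1 - (n : ℝ)))

/-- `S = {0}` if `n = 1`, and `S = {-θ, 0, θ}` if `n ≥ 3`. -/
def Sset (q : ℝ) (n : ℕ) : Set ℝ :=
  if n = 1 then {0} else {-theta q n, 0, theta q n}

/-- `I = (-θ, θ)` (all of `ℝ` when `n = 1`). -/
def Iset (q : ℝ) (n : ℕ) : Set ℝ :=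
  if n = 1 then Set.univ else Set.Ioo (-theta q n) (theta q n)

/-- The `n,q`-power difference operator `D_{n,q}`. -/
def Dnq (q : ℝ) (n : ℕ) (f : ℝ → ℝ) (t : ℝ) : ℝ :=
  if t ∈ Sset q n then deriv f t
  else (f (q * t ^ n) - f t) / (q * t ^ n - t)

/-- The `k`-th summand of the series defining the `n,q`-integral `∫_0^x f(t) d_{n,q}t`. -/
def nqSeq (q : ℝ) (n : ℕ) (f : ℝ → ℝ) (x : ℝ) (k : ℕ) : ℝ :=
  q ^ nbr n k * x ^ n ^ k * (q ^ n ^ k * x ^ (n ^ k * (n - 1)) - 1) *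
    f (q ^ nbr n k * x ^ n ^ k)

/-- `∫_0^x f(t) d_{n,q}t`. -/
def nqInt0 (q : ℝ) (n : ℕ) (f : ℝ → ℝ) (x : ℝ) : ℝ := -∑' k : ℕ, nqSeq q n f x k

/-- `∫_a^b f(t) d_{n,q}t = ∫_0^b f(t) d_{n,q}t − ∫_0^a f(t) d_{n,q}t`. -/
def nqInt (q : ℝ) (n : ℕ) (f : ℝ → ℝ) (a b : ℝ) : ℝ :=
  nqInt0 q n f b - nqInt0 q n f a

/-- The orbit `[s]_{n,q} = {q^{[k]_n}·s^{n^k} : k ∈ ℕ}`. -/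
def nqOrbit (q : ℝ) (n : ℕ) (s : ℝ) : Set ℝ :=
  Set.range fun k : ℕ => q ^ nbr n k * s ^ n ^ k

/-- The `n,q`-interval `[a,b]_{n,q}`. -/
def nqInterval (q : ℝ) (n : ℕ) (a b : ℝ) : Set ℝ :=
  nqOrbit q n a ∪ nqOrbit q n b ∪ {0}

/-!
Every `t ≠ 0` in `J` satisfies `f (q t^n) = f t`. On `[0, s]` the map `t ↦ q t^n` is a
contraction towards `0` with ratio `q |s|^(n-1) < 1` (this is what `s ∈ I` means), and for odd
`n` it preserves the sign, so it maps `[0, s]` into itself. Hence `f s` equals `f` at every point of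
the orbit of `s`, which tends to `0`, and continuity of `f` at `0` gives `f s = f 0`.
-/

open Set Topology

theorem Function.apply_eq_of_tendsto_iterate {α β : Type*} [TopologicalSpace α]
    [TopologicalSpace β] [T2Space β] {g : α → α} {f : α → β} {K : Set α}
    (hK : MapsTo g K K) (hfg : EqOn (f ∘ g) f K) {x y : α} (hx : x ∈ K)
    (hxy : Tendsto (fun k => g^[k] x) atTop (𝓝 y)) (hf : ContinuousAt f y) :
    f x = f y := by
  have hconst : ∀ k, f (g^[k] x) = f x := by
    intro k
    induction k with
    | zero => rfl
    | succ k ih => rw [Function.iterate_succ_apply', ← ih]; exact hfg (hK.iterate k hx)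
  refine tendsto_nhds_unique ?_ (hf.tendsto.comp hxy)
  simpa only [Function.comp_def, hconst] using tendsto_const_nhds

theorem tendsto_iterate_nhds_zero_of_norm_le {E : Type*} [SeminormedAddCommGroup E]
    {g : E → E} {K : Set E} {c : ℝ} (hK : MapsTo g K K) (hg : ∀ x ∈ K, ‖g x‖ ≤ c * ‖x‖)
    (hc0 : 0 ≤ c) (hc1 : c < 1) {x : E} (hx : x ∈ K) :
    Tendsto (fun k => g^[k] x) atTop (𝓝 0) := by
  have hbound : ∀ k, ‖g^[k] x‖ ≤ c ^ k * ‖x‖ := by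
    intro k
    induction k with
    | zero => simp
    | succ k ih =>
      calc ‖g^[k + 1] x‖ = ‖g (g^[k] x)‖ := by rw [Function.iterate_succ_apply']
        _ ≤ c * ‖g^[k] x‖ := hg _ (hK.iterate k hx)
        _ ≤ c * (c ^ k * ‖x‖) := by gcongr
        _ = c ^ (k + 1) * ‖x‖ := by ring
  refine squeeze_zero_norm hbound ?_
  simpa using (tendsto_pow_atTop_nhds_zero_of_lt_one hc0 hc1).mul_const ‖x‖

theorem theta_pow_sub_one {q : ℝ} (hq : 0 < q) {n : ℕ} (hn : 2 ≤ n) :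
    theta q n ^ (n - 1) = q⁻¹ := by
  have hn' : (2 : ℝ) ≤ n := by exact_mod_cast hn
  have hexp : 1 / (1 - (n : ℝ)) * ((n - 1 : ℕ) : ℝ) = -1 := by
    rw [Nat.cast_sub (by omega), Nat.cast_one]
    field_simp [show (1 : ℝ) - n ≠ 0 by linarith]
    ring
  rw [theta, ← Real.rpow_natCast, ← Real.rpow_mul hq.le, hexp, Real.rpow_neg_one]

theorem mul_abs_pow_sub_one_lt_one_of_mem_Iset {q : ℝ} (hq0 : 0 < q) (hq1 : q < 1) {n : ℕ}
    {s : ℝ} (hs : s ∈ Iset q n) : q * |s| ^ (n - 1) < 1 := by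
  rcases Nat.lt_or_ge n 2 with hn | hn
  · simpa [show n - 1 = 0 by omega] using hq1
  have hsθ : |s| < theta q n := by
    rw [Iset, if_neg (by omega)] at hs
    exact abs_lt.2 hs
  calc q * |s| ^ (n - 1) < q * theta q n ^ (n - 1) := by
        gcongr
        omega
    _ = 1 := by rw [theta_pow_sub_one hq0 hn, mul_inv_cancel₀ hq0.ne']

theorem abs_mul_pow_le {q x r : ℝ} (hq : 0 ≤ q) {n : ℕ} (hn : n ≠ 0) (hx : |x| ≤ r) :
    |q * x ^ n| ≤ q * r ^ (n - 1) * |x| := by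
  obtain ⟨m, rfl⟩ := Nat.exists_eq_succ_of_ne_zero hn
  rw [abs_mul, abs_pow, abs_of_nonneg hq, pow_succ, Nat.succ_sub_one, ← mul_assoc]
  gcongr

theorem mul_pow_mem_uIcc_zero {q x : ℝ} (hq : 0 ≤ q) {n : ℕ} (hn : Odd n)
    (h : |q * x ^ n| ≤ |x|) : q * x ^ n ∈ uIcc 0 x := by
  rw [mem_uIcc]
  rcases le_total 0 x with hx | hx
  · have hy : 0 ≤ q * x ^ n := mul_nonneg hq (hn.pow_nonneg_iff.2 hx)
    rw [abs_of_nonneg hy, abs_of_nonneg hx] at h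
    exact Or.inl ⟨hy, h⟩
  · have hy : q * x ^ n ≤ 0 := mul_nonpos_of_nonneg_of_nonpos hq (hn.pow_nonpos_iff.2 hx)
    rw [abs_of_nonpos hy, abs_of_nonpos hx] at h
    exact Or.inr ⟨by linarith, hy⟩

theorem stmt3 (q : ℝ) (hq0 : 0 < q) (hq1 : q < 1) (n : ℕ) (hn : Odd n)
    (J : Set ℝ) (hJI : J ⊆ Iset q n) (hJ : J.OrdConnected) (h0J : (0 : ℝ) ∈ J)
    (f : ℝ → ℝ) (hf0 : HasDerivAt f 0 0)
    (hD : ∀ t ∈ J, t ≠ 0 → (f (q * t ^ n) - f t) / (q * t ^ n - t) = 0) :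
    ∀ s ∈ J, ∀ t ∈ J, f s = f t := by
  suffices h : ∀ s ∈ J, f s = f 0 by
    intro s hs t ht; rw [h s hs, h t ht]
  intro s hs
  set g : ℝ → ℝ := fun x => q * x ^ n
  set c := q * |s| ^ (n - 1)
  have hc1 : c < 1 := mul_abs_pow_sub_one_lt_one_of_mem_Iset hq0 hq1 (hJI hs)
  have hcontr : ∀ x ∈ uIcc 0 s, |g x| ≤ c * |x| := fun x hx =>
    abs_mul_pow_le hq0.le hn.pos.ne' (by simpa using abs_sub_left_of_mem_uIcc hx)
  have hmaps : MapsTo g (uIcc 0 s) (uIcc 0 s) := fun x hx =>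
    uIcc_subset_uIcc left_mem_uIcc hx <| mul_pow_mem_uIcc_zero hq0.le hn <|
      (hcontr x hx).trans (mul_le_of_le_one_left (abs_nonneg x) hc1.le)
  have hfix : EqOn (f ∘ g) f (uIcc 0 s) := by
    intro x hx
    rcases eq_or_ne x 0 with rfl | hx0
    · simp [g, zero_pow hn.pos.ne']
    have hgx : g x ≠ x := fun hgx => by
      have := hcontr x hx
      rw [hgx] at this
      nlinarith [abs_pos.2 hx0]
    have := hD x (hJ.uIcc_subset h0J hs hx) hx0
    rw [div_eq_zero_iff, sub_eq_zero, sub_eq_zero] at this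
    exact this.resolve_right hgx
  exact Function.apply_eq_of_tendsto_iterate hmaps hfix right_mem_uIcc
    (tendsto_iterate_nhds_zero_of_norm_le hmaps hcontr (by positivity) hc1 right_mem_uIcc)
    hf0.continuousAt
end
end

section
/- Let f, g : ℝ → ℝ be n,q-differentiable at t ∈ ℝ (for t ∈ S this means f and g are differentiable at t). Then the product f·g is n,q-differentiable at t and D_{n,q}(f·g)(t) = D_{n,q} f(t)·g(t) + f(q·t^n)·D_{n,q} g(t) = f(t)·D_{n,q} g(t) + D_{n,q} f(t)·g(q·t^n). -/
open Filter
open scoped Classical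

noncomputable section

/-! Off `S`, the product rule is the algebraic identity for difference quotients
`(xy - x'y')/d = ((x - x')/d) y' + x ((y - y')/d)`, valid for every `d` (including the junk case
`d = 0`); on `S` the points are fixed points of `t ↦ q tⁿ`, so it reduces to the
Leibniz rule for `deriv`. The second formula is the first with `f` and `g` exchanged. -/

theorem mul_sub_mul_div {K : Type*} [Field K] (x x' y y' d : K) :
    (x * y - x' * y') / d = (x - x') / d * y' + x * ((y - y') / d) := by
  rw [div_mul_eq_mul_div, mul_div_assoc', ← add_div]
  ring

theorem mul_theta_pow {q : ℝ} (hq : 0 < q) {n : ℕ} (hn : n ≠ 1) :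
    q * theta q n ^ n = theta q n := by
  have hden : (1 : ℝ) - n ≠ 0 := sub_ne_zero.mpr (by exact_mod_cast hn.symm)
  rw [theta, ← Real.rpow_natCast, ← Real.rpow_mul hq.le, ← Real.rpow_one_add' hq.le]
  · congr 1
    field_simp
    ring
  · field_simp
    simp [hden]

theorem mul_pow_eq_self_of_mem_Sset {q : ℝ} (hq : 0 < q) {n : ℕ} (hn : Odd n) {t : ℝ}
    (ht : t ∈ Sset q n) : q * t ^ n = t := by
  unfold Sset at ht
  split_ifs at ht with hn1
  · simp [Set.mem_singleton_iff.mp ht, hn1]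
  · simp only [Set.mem_insert_iff, Set.mem_singleton_iff] at ht
    rcases ht with rfl | rfl | rfl
    · rw [hn.neg_pow, mul_neg, mul_theta_pow hq hn1]
    · simp [hn.pos.ne']
    · exact mul_theta_pow hq hn1

theorem Dnq_mul {q : ℝ} (hq : 0 < q) {n : ℕ} (hn : Odd n) {f g : ℝ → ℝ} {t : ℝ}
    (hf : t ∈ Sset q n → DifferentiableAt ℝ f t) (hg : t ∈ Sset q n → DifferentiableAt ℝ g t) :
    Dnq q n (fun x => f x * g x) t = Dnq q n f t * g t + f (q * t ^ n) * Dnq q n g t := by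
  by_cases ht : t ∈ Sset q n
  · simp only [Dnq, if_pos ht, mul_pow_eq_self_of_mem_Sset hq hn ht]
    exact deriv_fun_mul (hf ht) (hg ht)
  · simp only [Dnq, if_neg ht]
    exact mul_sub_mul_div _ _ _ _ _

theorem stmt4_general (q : ℝ) (hq0 : 0 < q) (n : ℕ) (hn : Odd n)
    (f g : ℝ → ℝ) (t : ℝ)
    (hf : t ∈ Sset q n → DifferentiableAt ℝ f t)
    (hg : t ∈ Sset q n → DifferentiableAt ℝ g t) :
    (t ∈ Sset q n → DifferentiableAt ℝ (fun x => f x * g x) t) ∧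
    Dnq q n (fun x => f x * g x) t =
      Dnq q n f t * g t + f (q * t ^ n) * Dnq q n g t ∧
    Dnq q n (fun x => f x * g x) t =
      f t * Dnq q n g t + Dnq q n f t * g (q * t ^ n) := by
  refine ⟨fun ht => (hf ht).mul (hg ht), Dnq_mul hq0 hn hf hg, ?_⟩
  have hswap := Dnq_mul hq0 hn hg hf
  simp only [mul_comm (g _) (f _)] at hswap
  rw [hswap]
  ring

theorem stmt4 (q : ℝ) (hq0 : 0 < q) (hq1 : q < 1) (n : ℕ) (hn : Odd n)
    (f g : ℝ → ℝ) (t : ℝ)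
    (hf : t ∈ Sset q n → DifferentiableAt ℝ f t)
    (hg : t ∈ Sset q n → DifferentiableAt ℝ g t) :
    (t ∈ Sset q n → DifferentiableAt ℝ (fun x => f x * g x) t) ∧
    Dnq q n (fun x => f x * g x) t =
      Dnq q n f t * g t + f (q * t ^ n) * Dnq q n g t ∧
    Dnq q n (fun x => f x * g x) t =
      f t * Dnq q n g t + Dnq q n f t * g (q * t ^ n) :=
  stmt4_general q hq0 n hn f g t hf hg
end
end

section
/- (Power chain rule) Let t ∈ ℝ with t ∉ S, let g : ℝ → ℝ be continuous on the closed interval with endpoints q·t^n and t, and let f : ℝ → ℝ be continuously differentiable. Then there exists a real number c in the closed interval with endpoints q·t^n and t such that D_{n,q}(f ∘ g)(t) = f′(g(c))·D_{n,q} g(t). -/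
open Filter
open scoped Classical

noncomputable section

/-!
Off `S`, `D_{n,q} F t` is the slope of `F` between `t` and `q tⁿ`. The mean value theorem gives
`f (g b) - f (g a) = f' y * (g b - g a)` for some `y` between `g a` and `g b`, and by the
intermediate value theorem `y = g c` for some `c` between `a` and `b`.
-/

open Set

theorem exists_mem_uIcc_sub_eq_deriv_mul_sub {f : ℝ → ℝ} (hf : Differentiable ℝ f) (u v : ℝ) :
    ∃ y ∈ uIcc u v, f v - f u = deriv f y * (v - u) := by
  wlog huv : u ≤ v generalizing u v
  · obtain ⟨y, hy, hfy⟩ := this v u (le_of_not_ge huv)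
    exact ⟨y, uIcc_comm u v ▸ hy, by linear_combination -hfy⟩
  rcases huv.eq_or_lt with rfl | hlt
  · exact ⟨u, left_mem_uIcc, by simp⟩
  obtain ⟨y, hy, hfy⟩ :=
    exists_deriv_eq_slope f hlt hf.continuous.continuousOn fun x _ => (hf x).differentiableWithinAt
  refine ⟨y, Icc_subset_uIcc (Ioo_subset_Icc_self hy), ?_⟩
  rw [hfy, div_mul_cancel₀ _ (sub_ne_zero.mpr hlt.ne')]

theorem exists_mem_uIcc_slope_comp_eq {f g : ℝ → ℝ} {a b : ℝ} (hf : Differentiable ℝ f)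
    (hg : ContinuousOn g (uIcc a b)) :
    ∃ c ∈ uIcc a b, slope (f ∘ g) a b = deriv f (g c) * slope g a b := by
  obtain ⟨y, hy, hfy⟩ := exists_mem_uIcc_sub_eq_deriv_mul_sub hf (g a) (g b)
  obtain ⟨c, hc, rfl⟩ := intermediate_value_uIcc hg hy
  refine ⟨c, hc, ?_⟩
  rw [slope_def_field, slope_def_field, Function.comp_apply, Function.comp_apply, hfy,
    mul_div_assoc]

theorem Dnq_eq_slope {q : ℝ} {n : ℕ} {t : ℝ} (ht : t ∉ Sset q n) (f : ℝ → ℝ) :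
    Dnq q n f t = slope f t (q * t ^ n) := by
  rw [Dnq, if_neg ht, slope_def_field]

theorem stmt7_general (q : ℝ) (n : ℕ)
    (t : ℝ) (ht : t ∉ Sset q n) (g f : ℝ → ℝ)
    (hg : ContinuousOn g (Set.uIcc (q * t ^ n) t))
    (hf : ContDiff ℝ 1 f) :
    ∃ c ∈ Set.uIcc (q * t ^ n) t,
      Dnq q n (f ∘ g) t = deriv f (g c) * Dnq q n g t := by
  obtain ⟨c, hc, hslope⟩ :=
    exists_mem_uIcc_slope_comp_eq (hf.differentiable one_ne_zero) (uIcc_comm (q * t ^ n) t ▸ hg)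
  exact ⟨c, uIcc_comm t (q * t ^ n) ▸ hc, by rw [Dnq_eq_slope ht, Dnq_eq_slope ht, hslope]⟩

theorem stmt7 (q : ℝ) (hq0 : 0 < q) (hq1 : q < 1) (n : ℕ) (hn : Odd n)
    (t : ℝ) (ht : t ∉ Sset q n) (g f : ℝ → ℝ)
    (hg : ContinuousOn g (Set.uIcc (q * t ^ n) t))
    (hf : ContDiff ℝ 1 f) :
    ∃ c ∈ Set.uIcc (q * t ^ n) t,
      Dnq q n (f ∘ g) t = deriv f (g c) * Dnq q n g t :=
  stmt7_general q n t ht g f hg hf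
end
end

section
/- Fix 0 < q < 1 and take n = 1, so that the n,q-integral is the Jackson q-integral ∫_0^x f(t) d_q t = x(1−q)·∑_{k=0}^∞ q^k·f(x·q^k). Define f : [0,1] → ℝ by f(x) = (1/(1−q))·(4·q^{−m}·x − (1+3q)) for q^{m+1} ≤ x ≤ q^m·(1+q)/2 (m ∈ ℕ), f(x) = (4/(1−q))·(−x·q^{−m} + 1) − 1 for q^m·(1+q)/2 ≤ x ≤ q^m (m ∈ ℕ), and f(0) = 0. Then ∫_{(1+q)/2}^{1} f(t) d_q t = −(3+q)/2 and ∫_{(1+q)/2}^{1} |f(t)| d_q t = (1−q)/2; in particular |∫_{(1+q)/2}^{1} f(t) d_q t| > ∫_{(1+q)/2}^{1} |f(t)| d_q t, so the inequality |∫_a^b f d_q t| ≤ ∫_a^b |f| d_q t fails in general. -/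
/-! On both nodes the sample points `x q^k` land where `f` is constant: `f (q^k) = -1` and
`f ((1+q)/2 · q^k) = 1`. A Jackson integral of a function that is constant `c` along the
geometric sequence `x q^k` equals `x c`, so `∫_{(1+q)/2}^1 f d_q t = -1 - (1+q)/2` while
`∫_{(1+q)/2}^1 |f| d_q t = 1 - (1+q)/2`. -/

noncomputable section

/-- The Jackson `q`-integral `∫_0^x f(t) d_q t = x(1-q)·∑_{k=0}^∞ q^k·f(x·q^k)`. -/
def jackson (q : ℝ) (f : ℝ → ℝ) (x : ℝ) : ℝ :=
  x * (1 - q) * ∑' k : ℕ, q ^ k * f (x * q ^ k)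

theorem jackson_eq_mul_of_forall_eq {q : ℝ} (hq0 : 0 ≤ q) (hq1 : q < 1) {f : ℝ → ℝ}
    {x c : ℝ} (hf : ∀ k : ℕ, f (x * q ^ k) = c) : jackson q f x = x * c := by
  have hq : 1 - q ≠ 0 := by linarith
  rw [jackson, tsum_congr fun k => by rw [hf k], tsum_mul_right,
    tsum_geometric_of_lt_one hq0 hq1]
  field_simp

section Counterexample

variable {q : ℝ} {f : ℝ → ℝ}

theorem apply_pow_eq_neg_one (hq0 : 0 < q) (hq1 : q < 1)
    (hf2 : ∀ m : ℕ, ∀ x : ℝ, q ^ m * (1 + q) / 2 ≤ x → x ≤ q ^ m →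
      f x = (4 / (1 - q)) * (-x / q ^ m + 1) - 1) (k : ℕ) :
    f (q ^ k) = -1 := by
  have hqk : 0 < q ^ k := pow_pos hq0 k
  have hq : 1 - q ≠ 0 := by linarith
  rw [hf2 k (q ^ k) (by nlinarith) le_rfl]
  field_simp
  ring

theorem apply_midpoint_mul_pow_eq_one (hq0 : 0 < q) (hq1 : q < 1)
    (hf1 : ∀ m : ℕ, ∀ x : ℝ, q ^ (m + 1) ≤ x → x ≤ q ^ m * (1 + q) / 2 →
      f x = (1 / (1 - q)) * (4 * x / q ^ m - (1 + 3 * q))) (k : ℕ) :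
    f ((1 + q) / 2 * q ^ k) = 1 := by
  have hqk : 0 < q ^ k := pow_pos hq0 k
  have hq : 1 - q ≠ 0 := by linarith
  rw [hf1 k _ (by rw [pow_succ]; nlinarith) (by linarith)]
  field_simp
  ring

end Counterexample

theorem stmt12_general (q : ℝ) (hq0 : 0 < q) (hq1 : q < 1) (f : ℝ → ℝ)
    (hf1 : ∀ m : ℕ, ∀ x : ℝ, q ^ (m + 1) ≤ x → x ≤ q ^ m * (1 + q) / 2 →
      f x = (1 / (1 - q)) * (4 * x / q ^ m - (1 + 3 * q)))
    (hf2 : ∀ m : ℕ, ∀ x : ℝ, q ^ m * (1 + q) / 2 ≤ x → x ≤ q ^ m →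
      f x = (4 / (1 - q)) * (-x / q ^ m + 1) - 1) :
    jackson q f 1 - jackson q f ((1 + q) / 2) = -(3 + q) / 2 ∧
    jackson q (fun t => |f t|) 1 - jackson q (fun t => |f t|) ((1 + q) / 2)
      = (1 - q) / 2 ∧
    |jackson q f 1 - jackson q f ((1 + q) / 2)| >
      jackson q (fun t => |f t|) 1 - jackson q (fun t => |f t|) ((1 + q) / 2) := by
  have hf_one := apply_pow_eq_neg_one hq0 hq1 hf2
  have hf_mid := apply_midpoint_mul_pow_eq_one hq0 hq1 hf1
  have j1 : jackson q f 1 = 1 * -1 :=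
    jackson_eq_mul_of_forall_eq hq0.le hq1 fun k => by rw [one_mul, hf_one]
  have j2 : jackson q f ((1 + q) / 2) = (1 + q) / 2 * 1 :=
    jackson_eq_mul_of_forall_eq hq0.le hq1 hf_mid
  have j3 : jackson q (fun t => |f t|) 1 = 1 * 1 :=
    jackson_eq_mul_of_forall_eq hq0.le hq1 fun k => by simp [hf_one]
  have j4 : jackson q (fun t => |f t|) ((1 + q) / 2) = (1 + q) / 2 * 1 :=
    jackson_eq_mul_of_forall_eq hq0.le hq1 fun k => by simp [hf_mid k]
  rw [j1, j2, j3, j4]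
  refine ⟨by ring, by ring, ?_⟩
  rw [abs_of_neg (by linarith)]
  linarith

theorem stmt12 (q : ℝ) (hq0 : 0 < q) (hq1 : q < 1) (f : ℝ → ℝ)
    (hf0 : f 0 = 0)
    (hf1 : ∀ m : ℕ, ∀ x : ℝ, q ^ (m + 1) ≤ x → x ≤ q ^ m * (1 + q) / 2 →
      f x = (1 / (1 - q)) * (4 * x / q ^ m - (1 + 3 * q)))
    (hf2 : ∀ m : ℕ, ∀ x : ℝ, q ^ m * (1 + q) / 2 ≤ x → x ≤ q ^ m →
      f x = (4 / (1 - q)) * (-x / q ^ m + 1) - 1) :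
    jackson q f 1 - jackson q f ((1 + q) / 2) = -(3 + q) / 2 ∧
    jackson q (fun t => |f t|) 1 - jackson q (fun t => |f t|) ((1 + q) / 2)
      = (1 - q) / 2 ∧
    |jackson q f 1 - jackson q f ((1 + q) / 2)| >
      jackson q (fun t => |f t|) 1 - jackson q (fun t => |f t|) ((1 + q) / 2) :=
  stmt12_general q hq0 hq1 f hf1 hf2
end
end

section
/- (Integration by parts) Let f, g : ℝ → ℝ be n,q-differentiable on I with f·g continuous at 0, and let a, b ∈ I. Suppose the series defining all the n,q-integrals involved converge. Then ∫_a^b f(t)·D_{n,q} g(t) d_{n,q}t = f(b)·g(b) − f(a)·g(a) − ∫_a^b D_{n,q} f(t)·g(q·t^n) d_{n,q}t. -/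
open Filter
open scoped Classical

noncomputable section

-- auxiliary development, to be inserted before stmt13
namespace Stmt13Aux

/-- The orbit point `x_k = q^{[k]_n} x^{n^k}`. -/
def xk (q : ℝ) (n : ℕ) (x : ℝ) (k : ℕ) : ℝ := q ^ nbr n k * x ^ n ^ k

lemma nbr_zero (n : ℕ) : nbr n 0 = 0 := by simp [nbr]

lemma nbr_succ (n k : ℕ) : nbr n (k + 1) = nbr n k + n ^ k := by
  simp [nbr, Finset.sum_range_succ]

lemma nbr_succ' (n k : ℕ) : nbr n (k + 1) = 1 + n * nbr n k := by
  unfold nbr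
  rw [Finset.sum_range_succ']
  simp only [pow_zero, pow_succ, ← Finset.sum_mul]
  ring

lemma xk_zero (q : ℝ) (n : ℕ) (x : ℝ) : xk q n x 0 = x := by
  simp [xk, nbr_zero]

lemma xk_succ (q : ℝ) (n : ℕ) (x : ℝ) (k : ℕ) :
    xk q n x (k + 1) = q * xk q n x k ^ n := by
  have h1 : xk q n x (k + 1) = q ^ (1 + nbr n k * n) * x ^ (n ^ k * n) := by
    rw [xk, nbr_succ', pow_succ, Nat.mul_comm n (nbr n k)]
  rw [h1, pow_add, pow_one, pow_mul, pow_mul, xk, mul_pow]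
  ring

lemma xk_sub (q : ℝ) (n : ℕ) (hn1 : 1 ≤ n) (x : ℝ) (k : ℕ) :
    xk q n x (k + 1) - xk q n x k =
      q ^ nbr n k * x ^ n ^ k * (q ^ n ^ k * x ^ (n ^ k * (n - 1)) - 1) := by
  have h1 : n ^ (k + 1) = n ^ k * (n - 1) + n ^ k := by
    rw [pow_succ]
    have : n = (n - 1) + 1 := (Nat.sub_add_cancel hn1).symm
    calc n ^ k * n = n ^ k * ((n - 1) + 1) := by rw [← this]
      _ = n ^ k * (n - 1) + n ^ k := by ring
  rw [xk, xk, nbr_succ, h1, pow_add, pow_add]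
  ring

lemma theta_pos {q : ℝ} (hq0 : 0 < q) (n : ℕ) : 0 < theta q n :=
  Real.rpow_pos_of_pos hq0 _

lemma theta_pow {q : ℝ} (hq0 : 0 < q) {n : ℕ} (hn2 : 2 ≤ n) :
    theta q n ^ (n - 1) = q⁻¹ := by
  have hne : (n : ℝ) - 1 ≠ 0 := by
    have : (2 : ℝ) ≤ (n : ℝ) := by exact_mod_cast hn2
    linarith
  have hcast : ((n - 1 : ℕ) : ℝ) = (n : ℝ) - 1 := by
    push_cast [Nat.cast_sub (by omega : 1 ≤ n)]
    ring
  rw [theta, ← Real.rpow_natCast (q ^ ((1 : ℝ) / (1 - (n : ℝ)))) (n - 1),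
    ← Real.rpow_mul hq0.le]
  have hn2' : (2 : ℝ) ≤ (n : ℝ) := by exact_mod_cast hn2
  have hexp : (1 : ℝ) / (1 - (n : ℝ)) * ((n - 1 : ℕ) : ℝ) = -1 := by
    rw [hcast]
    rw [div_mul_eq_mul_div, div_eq_iff (by linarith : (1:ℝ) - (n:ℝ) ≠ 0)]
    ring
  rw [hexp, Real.rpow_neg_one]

lemma no_fix {q : ℝ} (hq0 : 0 < q) (hq1 : q < 1) {n : ℕ} (hn1 : 1 ≤ n) {t : ℝ}
    (ht0 : t ≠ 0) (htθ : 2 ≤ n → |t| < theta q n) : q * t ^ n ≠ t := by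
  intro h
  have habs : q * |t| ^ n = |t| := by
    have h2 := congrArg abs h
    rwa [abs_mul, abs_pow, abs_of_pos hq0] at h2
  have ht0' : 0 < |t| := abs_pos.mpr ht0
  rcases eq_or_lt_of_le hn1 with h1 | h2
  · rw [← h1] at habs
    simp only [pow_one] at habs
    nlinarith
  · have hn2 : 2 ≤ n := h2
    have hlt := htθ hn2
    have hpow : |t| ^ n = |t| ^ (n - 1) * |t| := by
      rw [← pow_succ, Nat.sub_add_cancel hn1]
    rw [hpow] at habs
    have hq' : q * |t| ^ (n - 1) = 1 := by
      have := mul_right_cancel₀ ht0'.ne' (by linarith [habs] : q * |t| ^ (n - 1) * |t| = 1 * |t|)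
      linarith [this]
    have hθp := theta_pos hq0 n
    have hlt' : |t| ^ (n - 1) < theta q n ^ (n - 1) :=
      pow_lt_pow_left₀ hlt (abs_nonneg t) (by omega)
    rw [theta_pow hq0 hn2] at hlt'
    have : q * |t| ^ (n - 1) < q * q⁻¹ := by
      exact mul_lt_mul_of_pos_left hlt' hq0
    rw [mul_inv_cancel₀ hq0.ne'] at this
    linarith

lemma abs_lt_theta {q : ℝ} (hq0 : 0 < q) {n : ℕ} (hn1 : n ≠ 1) {x : ℝ}
    (hx : x ∈ Iset q n) : |x| < theta q n := by
  simp only [Iset, hn1, if_false, Set.mem_Ioo] at hx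
  rw [abs_lt]
  exact hx

lemma c_lt_one {q : ℝ} (hq0 : 0 < q) (hq1 : q < 1) {n : ℕ} (hn1 : 1 ≤ n) {x : ℝ}
    (hx : x ∈ Iset q n) : q * |x| ^ (n - 1) < 1 := by
  by_cases h1 : n = 1
  · simp only [h1]
    simpa using hq1
  · have hn2 : 2 ≤ n := by omega
    have hθ := theta_pos hq0 (q := q) n
    have hxθ : |x| < theta q n := abs_lt_theta hq0 h1 hx
    have hlt : |x| ^ (n - 1) < theta q n ^ (n - 1) :=
      pow_lt_pow_left₀ hxθ (abs_nonneg x) (by omega)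
    rw [theta_pow hq0 hn2] at hlt
    calc q * |x| ^ (n - 1) < q * q⁻¹ := mul_lt_mul_of_pos_left hlt hq0
      _ = 1 := mul_inv_cancel₀ hq0.ne'

lemma xk_bound {q : ℝ} (hq0 : 0 < q) (hq1 : q < 1) {n : ℕ} (hn1 : 1 ≤ n) {x : ℝ}
    (hx : x ∈ Iset q n) : ∀ k, |xk q n x k| ≤ (q * |x| ^ (n - 1)) ^ k * |x| := by
  intro k
  set c := q * |x| ^ (n - 1) with hc
  have hc0 : 0 ≤ c := mul_nonneg hq0.le (pow_nonneg (abs_nonneg x) _)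
  have hc1 : c < 1 := c_lt_one hq0 hq1 hn1 hx
  induction k with
  | zero => simp [xk_zero]
  | succ k ih =>
    have hck : c ^ k ≤ 1 := pow_le_one₀ hc0 hc1.le
    have hxk_le : |xk q n x k| ≤ |x| := by
      calc |xk q n x k| ≤ c ^ k * |x| := ih
        _ ≤ 1 * |x| := mul_le_mul_of_nonneg_right hck (abs_nonneg x)
        _ = |x| := one_mul _
    have hstep : |xk q n x (k + 1)| ≤ c * |xk q n x k| := by
      rw [xk_succ, abs_mul, abs_pow, abs_of_pos hq0]
      have hpow : |xk q n x k| ^ n = |xk q n x k| ^ (n - 1) * |xk q n x k| := by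
        rw [← pow_succ, Nat.sub_add_cancel hn1]
      rw [hpow, hc]
      have : |xk q n x k| ^ (n - 1) ≤ |x| ^ (n - 1) :=
        pow_le_pow_left₀ (abs_nonneg _) hxk_le _
      rw [← mul_assoc]
      exact mul_le_mul_of_nonneg_right (mul_le_mul_of_nonneg_left this hq0.le)
        (abs_nonneg _)
    calc |xk q n x (k + 1)| ≤ c * |xk q n x k| := hstep
      _ ≤ c * (c ^ k * |x|) := mul_le_mul_of_nonneg_left ih hc0
      _ = c ^ (k + 1) * |x| := by ring

lemma xk_le {q : ℝ} (hq0 : 0 < q) (hq1 : q < 1) {n : ℕ} (hn1 : 1 ≤ n) {x : ℝ}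
    (hx : x ∈ Iset q n) (k : ℕ) : |xk q n x k| ≤ |x| := by
  have h := xk_bound hq0 hq1 hn1 hx k
  have hc0 : 0 ≤ q * |x| ^ (n - 1) := mul_nonneg hq0.le (pow_nonneg (abs_nonneg x) _)
  have hc1 : q * |x| ^ (n - 1) < 1 := c_lt_one hq0 hq1 hn1 hx
  have hck : (q * |x| ^ (n - 1)) ^ k ≤ 1 := pow_le_one₀ hc0 hc1.le
  calc |xk q n x k| ≤ (q * |x| ^ (n - 1)) ^ k * |x| := h
    _ ≤ 1 * |x| := mul_le_mul_of_nonneg_right hck (abs_nonneg x)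
    _ = |x| := one_mul _

lemma xk_tendsto {q : ℝ} (hq0 : 0 < q) (hq1 : q < 1) {n : ℕ} (hn1 : 1 ≤ n) {x : ℝ}
    (hx : x ∈ Iset q n) : Tendsto (xk q n x) atTop (nhds 0) := by
  have hc0 : 0 ≤ q * |x| ^ (n - 1) := mul_nonneg hq0.le (pow_nonneg (abs_nonneg x) _)
  have hc1 : q * |x| ^ (n - 1) < 1 := c_lt_one hq0 hq1 hn1 hx
  have hlim : Tendsto (fun k : ℕ => (q * |x| ^ (n - 1)) ^ k * |x|) atTop (nhds 0) := by
    have := tendsto_pow_atTop_nhds_zero_of_lt_one hc0 hc1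
    simpa using this.mul_const |x|
  exact squeeze_zero_norm (fun k => by
    simpa [Real.norm_eq_abs] using xk_bound hq0 hq1 hn1 hx k) hlim

lemma xk_notMem_S {q : ℝ} (hq0 : 0 < q) (hq1 : q < 1) {n : ℕ} (hn1 : 1 ≤ n) {x : ℝ}
    (hx : x ∈ Iset q n) {k : ℕ} (h0 : xk q n x k ≠ 0) : xk q n x k ∉ Sset q n := by
  by_cases h1 : n = 1
  · subst h1
    simp [Sset, h0]
  · have habs : |xk q n x k| < theta q n :=
      lt_of_le_of_lt (xk_le hq0 hq1 hn1 hx k) (abs_lt_theta hq0 h1 hx)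
    have hlt := abs_lt.mp habs
    simp only [Sset, h1, if_false, Set.mem_insert_iff, Set.mem_singleton_iff]
    push_neg
    refine ⟨?_, h0, ?_⟩
    · intro h; rw [h] at hlt; linarith [hlt.1]
    · intro h; rw [h] at hlt; linarith [hlt.2]

lemma term_eq {q : ℝ} (hq0 : 0 < q) (hq1 : q < 1) {n : ℕ} (hn : Odd n)
    (f g : ℝ → ℝ) {x : ℝ} (hx : x ∈ Iset q n) (k : ℕ) :
    nqSeq q n (fun t => f t * Dnq q n g t + Dnq q n f t * g (q * t ^ n)) x k =
      f (xk q n x (k + 1)) * g (xk q n x (k + 1)) - f (xk q n x k) * g (xk q n x k) := by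
  have hn1 : 1 ≤ n := hn.pos
  have harg : q ^ nbr n k * x ^ n ^ k = xk q n x k := rfl
  by_cases h0 : xk q n x k = 0
  · have hqk : q ^ nbr n k ≠ 0 := pow_ne_zero _ hq0.ne'
    have hx0 : x ^ n ^ k = 0 := by
      have h0' := h0
      rw [xk] at h0'
      exact (mul_eq_zero.mp h0').resolve_left hqk
    have hk1 : xk q n x (k + 1) = 0 := by
      rw [xk_succ, h0, zero_pow (by positivity), mul_zero]
    rw [nqSeq, harg, h0, hk1]
    simp
  · have hnotS : xk q n x k ∉ Sset q n := xk_notMem_S hq0 hq1 hn1 hx h0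
    have hne : q * xk q n x k ^ n ≠ xk q n x k :=
      no_fix hq0 hq1 hn1 h0 (fun h2 => lt_of_le_of_lt (xk_le hq0 hq1 hn1 hx k)
        (abs_lt_theta hq0 (by omega) hx))
    have hd : xk q n x (k + 1) - xk q n x k ≠ 0 := by
      rw [xk_succ]; exact sub_ne_zero.mpr hne
    have hDg : Dnq q n g (xk q n x k) =
        (g (xk q n x (k + 1)) - g (xk q n x k)) / (xk q n x (k + 1) - xk q n x k) := by
      rw [Dnq, if_neg hnotS, xk_succ]
    have hDf : Dnq q n f (xk q n x k) =
        (f (xk q n x (k + 1)) - f (xk q n x k)) / (xk q n x (k + 1) - xk q n x k) := by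
      rw [Dnq, if_neg hnotS, xk_succ]
    rw [nqSeq, ← xk_sub q n hn1 x k, harg, hDg, hDf, ← xk_succ q n x k]
    field_simp
    ring

lemma nqInt0_parts {q : ℝ} (hq0 : 0 < q) (hq1 : q < 1) {n : ℕ} (hn : Odd n)
    (f g : ℝ → ℝ) (hfg0 : ContinuousAt (fun t => f t * g t) 0)
    {x : ℝ} (hx : x ∈ Iset q n)
    (hs : Summable (nqSeq q n (fun t => f t * Dnq q n g t + Dnq q n f t * g (q * t ^ n)) x)) :
    nqInt0 q n (fun t => f t * Dnq q n g t + Dnq q n f t * g (q * t ^ n)) x =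
      f x * g x - f 0 * g 0 := by
  have hn1 : 1 ≤ n := hn.pos
  set F := fun t => f t * Dnq q n g t + Dnq q n f t * g (q * t ^ n) with hF
  have hpart : ∀ N, ∑ k ∈ Finset.range N, nqSeq q n F x k =
      f (xk q n x N) * g (xk q n x N) - f (xk q n x 0) * g (xk q n x 0) := by
    intro N
    calc ∑ k ∈ Finset.range N, nqSeq q n F x k
        = ∑ k ∈ Finset.range N,
            (f (xk q n x (k + 1)) * g (xk q n x (k + 1)) -
              f (xk q n x k) * g (xk q n x k)) :=
          Finset.sum_congr rfl (fun k _ => term_eq hq0 hq1 hn f g hx k)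
      _ = _ := Finset.sum_range_sub (fun k => f (xk q n x k) * g (xk q n x k)) N
  have hP : Tendsto (fun N => f (xk q n x N) * g (xk q n x N)) atTop (nhds (f 0 * g 0)) :=
    hfg0.tendsto.comp (xk_tendsto hq0 hq1 hn1 hx)
  have h2 : Tendsto (fun N => ∑ k ∈ Finset.range N, nqSeq q n F x k) atTop
      (nhds (f 0 * g 0 - f (xk q n x 0) * g (xk q n x 0))) := by
    simp only [hpart]
    exact hP.sub_const _
  have heq : (∑' k, nqSeq q n F x k) = f 0 * g 0 - f (xk q n x 0) * g (xk q n x 0) :=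
    tendsto_nhds_unique hs.hasSum.tendsto_sum_nat h2
  rw [nqInt0, heq, xk_zero]
  ring

end Stmt13Aux

open Stmt13Aux in
theorem stmt13 (q : ℝ) (hq0 : 0 < q) (hq1 : q < 1) (n : ℕ) (hn : Odd n)
    (f g : ℝ → ℝ)
    (hfd : DifferentiableAt ℝ f 0) (hgd : DifferentiableAt ℝ g 0)
    (hfg0 : ContinuousAt (fun t => f t * g t) 0)
    (a b : ℝ) (ha : a ∈ Iset q n) (hb : b ∈ Iset q n)
    (h1a : Summable (nqSeq q n (fun t => f t * Dnq q n g t) a))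
    (h1b : Summable (nqSeq q n (fun t => f t * Dnq q n g t) b))
    (h2a : Summable (nqSeq q n (fun t => Dnq q n f t * g (q * t ^ n)) a))
    (h2b : Summable (nqSeq q n (fun t => Dnq q n f t * g (q * t ^ n)) b)) :
    nqInt q n (fun t => f t * Dnq q n g t) a b =
      f b * g b - f a * g a -
        nqInt q n (fun t => Dnq q n f t * g (q * t ^ n)) a b := by
  have hseq : ∀ (x : ℝ) (k : ℕ),
      nqSeq q n (fun t => f t * Dnq q n g t + Dnq q n f t * g (q * t ^ n)) x k =
        nqSeq q n (fun t => f t * Dnq q n g t) x k +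
          nqSeq q n (fun t => Dnq q n f t * g (q * t ^ n)) x k := by
    intro x k
    simp only [nqSeq]
    ring
  have hsuma : Summable
      (nqSeq q n (fun t => f t * Dnq q n g t + Dnq q n f t * g (q * t ^ n)) a) :=
    (summable_congr (hseq a)).mpr (h1a.add h2a)
  have hsumb : Summable
      (nqSeq q n (fun t => f t * Dnq q n g t + Dnq q n f t * g (q * t ^ n)) b) :=
    (summable_congr (hseq b)).mpr (h1b.add h2b)
  have hIa := nqInt0_parts hq0 hq1 hn f g hfg0 ha hsuma
  have hIb := nqInt0_parts hq0 hq1 hn f g hfg0 hb hsumb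
  have hsa : nqInt0 q n (fun t => f t * Dnq q n g t + Dnq q n f t * g (q * t ^ n)) a =
      nqInt0 q n (fun t => f t * Dnq q n g t) a +
        nqInt0 q n (fun t => Dnq q n f t * g (q * t ^ n)) a := by
    simp only [nqInt0]
    rw [tsum_congr (hseq a), Summable.tsum_add h1a h2a]
    ring
  have hsb : nqInt0 q n (fun t => f t * Dnq q n g t + Dnq q n f t * g (q * t ^ n)) b =
      nqInt0 q n (fun t => f t * Dnq q n g t) b +
        nqInt0 q n (fun t => Dnq q n f t * g (q * t ^ n)) b := by
    simp only [nqInt0]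
    rw [tsum_congr (hseq b), Summable.tsum_add h1b h2b]
    ring
  rw [hsa] at hIa
  rw [hsb] at hIb
  simp only [nqInt]
  linarith
end
end

section
/- Let f : ℝ → ℝ be continuous at 0 and suppose the series defining ∫_0^t f(r) d_{n,q}r and ∫_0^{q·t^n} f(r) d_{n,q}r converge for a given t ∈ I. Then ∫_t^{q·t^n} f(r) d_{n,q}r = (q·t^n − t)·f(t). -/
open Filter
open scoped Classical

noncomputable section

theorem stmt14 (q : ℝ) (hq0 : 0 < q) (hq1 : q < 1) (n : ℕ) (hn : Odd n)
    (f : ℝ → ℝ) (hf : ContinuousAt f 0) (t : ℝ) (ht : t ∈ Iset q n)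
    (h1 : Summable (nqSeq q n f t)) (h2 : Summable (nqSeq q n f (q * t ^ n))) :
    nqInt q n f t (q * t ^ n) = (q * t ^ n - t) * f t := by
  have hn1 : 1 ≤ n := hn.pos
  have key : ∀ k, nqSeq q n f (q * t ^ n) k = nqSeq q n f t (k + 1) := by
    intro k
    have harg : q ^ nbr n k * (q * t ^ n) ^ n ^ k
        = q ^ nbr n (k + 1) * t ^ n ^ (k + 1) := by
      rw [nbr, nbr, Finset.sum_range_succ, mul_pow, ← pow_mul, pow_add, pow_succ]
      ring
    have hmid : q ^ n ^ k * (q * t ^ n) ^ (n ^ k * (n - 1))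
        = q ^ n ^ (k + 1) * t ^ (n ^ (k + 1) * (n - 1)) := by
      rw [mul_pow, ← pow_mul, ← mul_assoc, ← pow_add]
      have : n ^ k + n ^ k * (n - 1) = n ^ (k + 1) := by
        obtain ⟨m, rfl⟩ := Nat.exists_eq_add_of_le hn1
        rw [pow_succ, Nat.add_sub_cancel_left]
        ring
      rw [this, pow_succ]
      ring_nf
    simp only [nqSeq, harg, hmid]
  have hshift : ∑' k, nqSeq q n f t k
      = nqSeq q n f t 0 + ∑' k, nqSeq q n f t (k + 1) := Summable.tsum_eq_zero_add h1
  have h2' : ∑' k, nqSeq q n f (q * t ^ n) k = ∑' k, nqSeq q n f t (k + 1) := by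
    exact tsum_congr key
  have h0 : nqSeq q n f t 0 = (q * t ^ n - t) * f t := by
    have htn : t ^ n = t * t ^ (n - 1) := by
      conv_lhs => rw [show n = 1 + (n - 1) by omega]
      rw [pow_add, pow_one]
    simp only [nqSeq, nbr, Finset.range_zero, Finset.sum_empty, pow_zero, pow_one, one_mul,
      one_mul, htn]
    ring
  rw [nqInt, nqInt0, nqInt0, h2', hshift, h0]
  ring
end
end

section
/- (Differentiation under the n,q-integral sign) Let s ∈ I and set [s]_{n,q} = {q^{[k]_n}·s^{n^k} : k ∈ ℕ}. Let ε̄ > 0, ε₀ ∈ (−ε̄, ε̄), and g : ℝ × (−ε̄, ε̄) → ℝ. Assume: (i) g(t,·) is differentiable at ε₀ uniformly in t ∈ [s]_{n,q}, i.e., there is a function ∂₂g(·, ε₀) on [s]_{n,q} such that for every ε′ > 0 there exists δ > 0 with |(g(t,ε) − g(t,ε₀))/(ε − ε₀) − ∂₂g(t,ε₀)| < ε′ for all t ∈ [s]_{n,q} and all ε with 0 < |ε − ε₀| < δ; (ii) G(ε) := ∫_0^s g(t,ε) d_{n,q}t exists (the defining series converges) for all ε in a neighborhood of ε₀; (iii)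 ∫_0^s ∂₂g(t,ε₀) d_{n,q}t exists. Then G is differentiable at ε₀ and G′(ε₀) = ∫_0^s ∂₂g(t,ε₀) d_{n,q}t. -/
open Filter
open scoped Classical

noncomputable section

/-! Writing `x k = q ^ [k]_n * s ^ n ^ k` for the nodes, the `k`-th term of the series is
`(x (k + 1) - x k) * f (x k)`. The nodes decay geometrically for `n = 1` and doubly
exponentially for `n ≥ 3`, `|x k| = θ * (|s| / θ) ^ n ^ k` with `|s| < θ`, so these weights are
absolutely summable. The difference quotient
of `G` is the weighted series of the difference quotients of `g (x k) ·`, which converge uniformly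
in `k`; against absolutely summable weights, uniform convergence passes to the sum by dominated
convergence. -/

open Topology

def nqNode (q : ℝ) (n : ℕ) (s : ℝ) (k : ℕ) : ℝ := q ^ nbr n k * s ^ n ^ k

lemma nbr_succ (n k : ℕ) : nbr n (k + 1) = nbr n k + n ^ k :=
  Finset.sum_range_succ _ _

lemma nbr_mul_pred_add_one {n : ℕ} (hn : n ≠ 0) (k : ℕ) : nbr n k * (n - 1) + 1 = n ^ k := by
  have h := geom_sum_mul_add (n - 1) k
  rwa [Nat.sub_add_cancel (Nat.one_le_iff_ne_zero.mpr hn)] at h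

lemma nbr_one (k : ℕ) : nbr 1 k = k := by
  simp [nbr]

lemma nqSeq_eq_sub_mul {n : ℕ} (hn : n ≠ 0) (q : ℝ) (f : ℝ → ℝ) (s : ℝ) (k : ℕ) :
    nqSeq q n f s k = (nqNode q n s (k + 1) - nqNode q n s k) * f (nqNode q n s k) := by
  have hexp : n ^ (k + 1) = n ^ k + n ^ k * (n - 1) := by
    obtain ⟨m, rfl⟩ := Nat.exists_eq_add_one_of_ne_zero hn
    rw [Nat.add_sub_cancel]
    ring
  rw [nqSeq, nqNode, nqNode, nbr_succ, hexp, pow_add, pow_add]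
  ring

lemma inv_theta_pow_pred {q : ℝ} (hq : 0 < q) {n : ℕ} (hn : n ≠ 0) (hn1 : n ≠ 1) :
    (theta q n)⁻¹ ^ (n - 1) = q := by
  have hn1' : (n : ℝ) - 1 ≠ 0 := sub_ne_zero.mpr (by exact_mod_cast hn1)
  rw [theta, ← Real.rpow_neg hq.le, ← Real.rpow_mul_natCast hq.le,
    Nat.cast_sub (Nat.one_le_iff_ne_zero.mpr hn), Nat.cast_one]
  convert Real.rpow_one q using 2
  rw [← neg_sub, div_neg, neg_neg, one_div_mul_cancel hn1']

lemma abs_nqNode_eq {q : ℝ} (hq : 0 < q) {n : ℕ} (hn : n ≠ 0) (hn1 : n ≠ 1) (s : ℝ) (k : ℕ) :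
    |nqNode q n s k| = theta q n * (|s| / theta q n) ^ n ^ k := by
  have hθ : theta q n ≠ 0 := (Real.rpow_pos_of_pos hq _).ne'
  have hq' := inv_theta_pow_pred hq hn hn1
  set θ := theta q n
  rw [nqNode, abs_mul, abs_pow, abs_pow, abs_of_pos hq, ← hq', ← pow_mul, div_eq_mul_inv,
    mul_pow, ← nbr_mul_pred_add_one hn k, pow_succ θ⁻¹, mul_comm (n - 1)]
  field_simp

lemma summable_abs_nqNode {q : ℝ} (hq0 : 0 < q) (hq1 : q < 1) {n : ℕ} (hn : n ≠ 0)
    {s : ℝ} (hs : s ∈ Iset q n) : Summable fun k => |nqNode q n s k| := by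
  by_cases hn1 : n = 1
  · subst hn1
    simpa [nqNode, nbr_one, abs_mul, abs_of_pos hq0] using
      (summable_geometric_of_lt_one hq0.le hq1).mul_right |s|
  · have hθ : 0 < theta q n := Real.rpow_pos_of_pos hq0 _
    rw [Iset, if_neg hn1] at hs
    have hr0 : 0 ≤ |s| / theta q n := by positivity
    have hr1 : |s| / theta q n < 1 := (div_lt_one hθ).mpr (abs_lt.mpr hs)
    refine Summable.of_nonneg_of_le (fun k => abs_nonneg _) (fun k => ?_)
      ((summable_geometric_of_lt_one hr0 hr1).mul_left (theta q n))
    rw [abs_nqNode_eq hq0 hn hn1]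
    exact mul_le_mul_of_nonneg_left
      (pow_le_pow_of_le_one hr0 hr1.le (Nat.lt_pow_self (by omega)).le) hθ.le

lemma summable_abs_nqNode_succ_sub {q : ℝ} (hq0 : 0 < q) (hq1 : q < 1) {n : ℕ} (hn : n ≠ 0)
    {s : ℝ} (hs : s ∈ Iset q n) :
    Summable fun k => |nqNode q n s (k + 1) - nqNode q n s k| := by
  have h := summable_abs_nqNode hq0 hq1 hn hs
  exact Summable.of_nonneg_of_le (fun k => abs_nonneg _) (fun k => abs_sub _ _)
    (((summable_nat_add_iff 1).mpr h).add h)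

lemma tendsto_tsum_mul_of_tendstoUniformly {ι β : Type*} {p : Filter ι} {c φ : β → ℝ}
    {Φ : ι → β → ℝ} (hc : Summable fun k => |c k|) (hcφ : Summable fun k => c k * φ k)
    (hΦ : TendstoUniformly Φ φ p) :
    Tendsto (fun i => ∑' k, c k * Φ i k) p (𝓝 (∑' k, c k * φ k)) := by
  refine tendsto_tsum_of_dominated_convergence (hcφ.abs.add hc)
    (fun k => (hΦ.tendsto_at k).const_mul (c k)) ?_
  filter_upwards [Metric.tendstoUniformly_iff.mp hΦ 1 one_pos] with i hi k
  rw [Real.norm_eq_abs, abs_mul]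
  have hΦk : |Φ i k| ≤ |φ k| + 1 := by
    have := abs_sub_abs_le_abs_sub (Φ i k) (φ k)
    rw [← Real.dist_eq, dist_comm] at this
    linarith [hi k]
  calc |c k| * |Φ i k| ≤ |c k| * (|φ k| + 1) := mul_le_mul_of_nonneg_left hΦk (abs_nonneg _)
    _ = |c k * φ k| + |c k| := by rw [abs_mul]; ring

lemma hasDerivAt_tsum_mul_of_tendstoUniformly_slope {β : Type*} {c : β → ℝ}
    {F : β → ℝ → ℝ} {F' : β → ℝ} {x : ℝ} (hc : Summable fun k => |c k|)
    (hF : ∀ᶠ y in 𝓝 x, Summable fun k => c k * F k y) (hF' : Summable fun k => c k * F' k)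
    (hslope : TendstoUniformly (fun y k => slope (F k) x y) F' (𝓝[≠] x)) :
    HasDerivAt (fun y => ∑' k, c k * F k y) (∑' k, c k * F' k) x := by
  rw [hasDerivAt_iff_tendsto_slope]
  refine (tendsto_tsum_mul_of_tendstoUniformly hc hF' hslope).congr' ?_
  filter_upwards [eventually_nhdsWithin_of_eventually_nhds hF] with y hy
  rw [slope_def_field, ← Summable.tsum_sub hy hF.self_of_nhds, ← tsum_div_const]
  exact tsum_congr fun k => by rw [slope_def_field]; ring

theorem stmt16_general (q : ℝ) (hq0 : 0 < q) (hq1 : q < 1) (n : ℕ) (hn : Odd n)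
    (s : ℝ) (hs : s ∈ Iset q n)
    (ebar e0 : ℝ) (he0 : e0 ∈ Set.Ioo (-ebar) ebar)
    (g : ℝ → ℝ → ℝ) (dg : ℝ → ℝ)
    (hunif : ∀ ε' > (0 : ℝ), ∃ δ > (0 : ℝ), ∀ t ∈ nqOrbit q n s,
      ∀ ε ∈ Set.Ioo (-ebar) ebar, 0 < |ε - e0| → |ε - e0| < δ →
        |(g t ε - g t e0) / (ε - e0) - dg t| < ε')
    (hG : ∀ᶠ ε in nhds e0, Summable (nqSeq q n (fun t => g t ε) s))
    (hdg : Summable (nqSeq q n dg s)) :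
    HasDerivAt (fun ε => nqInt0 q n (fun t => g t ε) s) (nqInt0 q n dg s) e0 := by
  have hn0 : n ≠ 0 := hn.pos.ne'
  have hslope : TendstoUniformly (fun ε k => slope (g (nqNode q n s k)) e0 ε)
      (fun k => dg (nqNode q n s k)) (𝓝[≠] e0) := by
    refine Metric.tendstoUniformly_iff.mpr fun ε' hε' => ?_
    obtain ⟨δ, hδ, hδε'⟩ := hunif ε' hε'
    filter_upwards [nhdsWithin_le_nhds (Ioo_mem_nhds he0.1 he0.2),
      nhdsWithin_le_nhds (Metric.ball_mem_nhds e0 hδ), self_mem_nhdsWithin]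
      with ε hε hεδ hεne k
    rw [dist_comm, Real.dist_eq, slope_def_field]
    exact hδε' _ ⟨k, rfl⟩ ε hε (abs_pos.mpr (sub_ne_zero.mpr hεne)) hεδ
  have hseq (f : ℝ → ℝ) :
      nqSeq q n f s = fun k => (nqNode q n s (k + 1) - nqNode q n s k) * f (nqNode q n s k) :=
    funext (nqSeq_eq_sub_mul hn0 q f s)
  simp only [nqInt0, hseq] at hG hdg ⊢
  exact (hasDerivAt_tsum_mul_of_tendstoUniformly_slope
    (summable_abs_nqNode_succ_sub hq0 hq1 hn0 hs) hG hdg hslope).neg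

theorem stmt16 (q : ℝ) (hq0 : 0 < q) (hq1 : q < 1) (n : ℕ) (hn : Odd n)
    (s : ℝ) (hs : s ∈ Iset q n)
    (ebar e0 : ℝ) (hebar : 0 < ebar) (he0 : e0 ∈ Set.Ioo (-ebar) ebar)
    (g : ℝ → ℝ → ℝ) (dg : ℝ → ℝ)
    (hunif : ∀ ε' > (0 : ℝ), ∃ δ > (0 : ℝ), ∀ t ∈ nqOrbit q n s,
      ∀ ε ∈ Set.Ioo (-ebar) ebar, 0 < |ε - e0| → |ε - e0| < δ →
        |(g t ε - g t e0) / (ε - e0) - dg t| < ε')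
    (hG : ∀ᶠ ε in nhds e0, Summable (nqSeq q n (fun t => g t ε) s))
    (hdg : Summable (nqSeq q n dg s)) :
    HasDerivAt (fun ε => nqInt0 q n (fun t => g t ε) s) (nqInt0 q n dg s) e0 :=
  stmt16_general q hq0 hq1 n hn s hs ebar e0 he0 g dg hunif hG hdg
end
end

section
/- (Leitmann's power quantum fundamental lemma) Let a, b ∈ I with a < b, α, β ∈ ℝ, and let f, f̄ : ℝ × ℝ × ℝ → ℝ be Lagrangians defining L[y] = ∫_a^b f(t, y(q·t^n), D_{n,q} y(t)) d_{n,q}t and L̄[ȳ] = ∫_a^b f̄(t, ȳ(q·t^n), D_{n,q} ȳ(t)) d_{n,q}t over functions in 𝔼 (functions y : ℝ → ℝ such that y and D_{n,q} y are continuous at 0 and bounded on [a,b]_{n,q}), where y ranges over 𝔼 with y(a) = α, y(b) = β and ȳ ranges over 𝔼 with ȳ(a) = z̄(a, α), ȳ(b) = z̄(b, β). Let y = z(t, ȳ) be a transformation with unique inverse ȳ = z̄(t, y) for all t ∈ [a,b]_{n,q}, giving a one-to-one correspondence y ↔ ȳ between these two classes of functions (with z(·, ȳ(·)) ∈ 𝔼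 whenever ȳ ∈ 𝔼 and conversely). Suppose there exists G : ℝ × ℝ → ℝ such that for every corresponding pair (y, ȳ) the identity f(t, y(q·t^n), D_{n,q} y(t)) − f̄(t, ȳ(q·t^n), D_{n,q} ȳ(t)) = D_{n,q}( t ↦ G(t, ȳ(t)) )(t) holds for all t ∈ [a,b]_{n,q}, with t ↦ G(t, ȳ(t)) continuous at 0 and the series defining its n,q-integrals convergent. Then L[y] − L̄[ȳ] = G(b, z̄(b, β)) − G(a, z̄(a, α)) for every corresponding pair; consequently, if ȳ* yields the extremum of L̄ over its class, then y* = z(·, ȳ*) yields the extremum of L over its class. -/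
open Filter
open scoped Classical

noncomputable section

/-- The class `𝔼`: `y` is `n,q`-differentiable with `y` and `D_{n,q} y`
continuous at `0` and bounded on `[a,b]_{n,q}`. -/
def Emem (q : ℝ) (n : ℕ) (a b : ℝ) (y : ℝ → ℝ) : Prop :=
  DifferentiableAt ℝ y 0 ∧
  ContinuousAt y 0 ∧ ContinuousAt (Dnq q n y) 0 ∧
  (∃ C, ∀ t ∈ nqInterval q n a b, |y t| ≤ C) ∧
  (∃ C, ∀ t ∈ nqInterval q n a b, |Dnq q n y t| ≤ C)

/-- The norm `‖y‖₁ = sup_{t∈[a,b]_{n,q}} |y(t)| + sup_{t∈[a,b]_{n,q}} |D_{n,q} y(t)|`. -/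
def norm1 (q : ℝ) (n : ℕ) (a b : ℝ) (y : ℝ → ℝ) : ℝ :=
  sSup ((fun t => |y t|) '' nqInterval q n a b) +
    sSup ((fun t => |Dnq q n y t|) '' nqInterval q n a b)

/-- The variational functional `L[y] = ∫_a^b f(t, y(q t^n), D_{n,q} y(t)) d_{n,q}t`. -/
def Lfun (q : ℝ) (n : ℕ) (a b : ℝ) (f : ℝ → ℝ → ℝ → ℝ) (y : ℝ → ℝ) : ℝ :=
  nqInt q n (fun t => f t (y (q * t ^ n)) (Dnq q n y t)) a b

/-!
Along the orbit `t₀ = x`, `t_{k+1} = q t_kⁿ` the `k`-th summand of `∫_0^x D_{n,q}F d_{n,q}t`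
is `(t_{k+1} - t_k) D_{n,q}F(t_k) = F(t_{k+1}) - F(t_k)`, so the series telescopes. On `I` we have
`q|x|ⁿ⁻¹ < 1`, hence `|t_{k+1}| ≤ q|x|ⁿ⁻¹ |t_k|` and the orbit tends to `0` geometrically; for `F`
continuous at `0` this gives `∫_a^b D_{n,q}F = F(b) - F(a)`. Integrating
`f - f̄ = D_{n,q}(G(·, ȳ))` therefore yields `L[y] - L̄[ȳ] = G(b, z̄(b,β)) - G(a, z̄(a,α))`,
a constant independent of the corresponding pair, so the correspondence `y ↔ ȳ` transports extrema.
-/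

namespace NQCalculus

open Topology

def nqOrbitSeq (q : ℝ) (n : ℕ) (x : ℝ) (k : ℕ) : ℝ := q ^ nbr n k * x ^ n ^ k

lemma nbr_succ (n k : ℕ) : nbr n (k + 1) = nbr n k + n ^ k :=
  Finset.sum_range_succ _ _

lemma nbr_succ' (n k : ℕ) : nbr n (k + 1) = n * nbr n k + 1 := by
  simp only [nbr, Finset.sum_range_succ', pow_succ', Finset.mul_sum, pow_zero]

@[simp]
lemma nqOrbitSeq_zero (q : ℝ) (n : ℕ) (x : ℝ) : nqOrbitSeq q n x 0 = x := by
  simp [nqOrbitSeq, nbr]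

lemma nqOrbitSeq_succ (q : ℝ) (n : ℕ) (x : ℝ) (k : ℕ) :
    nqOrbitSeq q n x (k + 1) = q * nqOrbitSeq q n x k ^ n := by
  simp only [nqOrbitSeq, nbr_succ', mul_pow, ← pow_mul, pow_succ]
  ring

lemma nqOrbitSeq_mem_nqOrbit (q : ℝ) (n : ℕ) (x : ℝ) (k : ℕ) :
    nqOrbitSeq q n x k ∈ nqOrbit q n x :=
  ⟨k, rfl⟩

lemma nqSeq_eq {n : ℕ} (hn : 1 ≤ n) (q : ℝ) (g : ℝ → ℝ) (x : ℝ) (k : ℕ) :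
    nqSeq q n g x k =
      (q * nqOrbitSeq q n x k ^ n - nqOrbitSeq q n x k) * g (nqOrbitSeq q n x k) := by
  have hexp : n ^ k + n ^ k * (n - 1) = n ^ (k + 1) := by
    rw [← mul_one_add, Nat.add_sub_cancel' hn, pow_succ]
  rw [← nqOrbitSeq_succ, nqOrbitSeq, nqOrbitSeq, nbr_succ, ← hexp]
  simp only [nqSeq, pow_add]
  ring

lemma mul_theta_pow_pred {q : ℝ} (hq0 : 0 < q) {n : ℕ} (hn : 2 ≤ n) :
    q * theta q n ^ (n - 1) = 1 := by
  have hne : (1 : ℝ) - n ≠ 0 := by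
    have : (2 : ℝ) ≤ n := by exact_mod_cast hn
    linarith
  rw [theta, ← Real.rpow_natCast, ← Real.rpow_mul hq0.le, Nat.cast_sub (by omega),
    Nat.cast_one, show 1 / (1 - (n : ℝ)) * (n - 1) = -1 by field_simp; ring,
    Real.rpow_neg_one, mul_inv_cancel₀ hq0.ne']

/-- Hence the summands of an `n,q`-integral at points of `S`, where `D_{n,q}` is a derivative,
vanish: the integral only sees difference quotients. -/
lemma mul_pow_eq_self_of_mem_Sset {q : ℝ} (hq0 : 0 < q) {n : ℕ} (hn : Odd n) {t : ℝ}
    (ht : t ∈ Sset q n) :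
    q * t ^ n = t := by
  unfold Sset at ht
  split_ifs at ht with h1
  · simp_all
  · have hn2 : 2 ≤ n := by
      obtain ⟨m, rfl⟩ := hn
      omega
    have hθ : q * theta q n ^ n = theta q n := by
      calc q * theta q n ^ n = q * theta q n ^ (n - 1) * theta q n := by
            rw [mul_assoc, ← pow_succ, Nat.sub_add_cancel hn.pos]
        _ = theta q n := by rw [mul_theta_pow_pred hq0 hn2, one_mul]
    rcases ht with rfl | rfl | rfl
    · rw [hn.neg_pow, mul_neg, hθ]
    · simp [hn.pos.ne']
    · exact hθ

lemma Dnq_of_mul_pow_ne {q : ℝ} (hq0 : 0 < q) {n : ℕ} (hn : Odd n) (F : ℝ → ℝ) {t : ℝ}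
    (ht : q * t ^ n ≠ t) :
    Dnq q n F t = (F (q * t ^ n) - F t) / (q * t ^ n - t) :=
  if_neg fun hS => ht (mul_pow_eq_self_of_mem_Sset hq0 hn hS)

lemma nqSeq_Dnq {q : ℝ} (hq0 : 0 < q) {n : ℕ} (hn : Odd n) (F : ℝ → ℝ) (x : ℝ) (k : ℕ) :
    nqSeq q n (Dnq q n F) x k = F (nqOrbitSeq q n x (k + 1)) - F (nqOrbitSeq q n x k) := by
  rw [nqSeq_eq hn.pos, nqOrbitSeq_succ]
  set t := nqOrbitSeq q n x k
  by_cases ht : q * t ^ n = t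
  · simp [ht]
  · rw [Dnq_of_mul_pow_ne hq0 hn F ht, mul_div_cancel₀ _ (sub_ne_zero.2 ht)]

lemma mul_abs_pow_pred_lt_one {q : ℝ} (hq0 : 0 < q) (hq1 : q < 1) {n : ℕ} (hn : 1 ≤ n) {x : ℝ}
    (hx : x ∈ Iset q n) :
    q * |x| ^ (n - 1) < 1 := by
  unfold Iset at hx
  split_ifs at hx with h1
  · simpa [h1] using hq1
  · have hxθ : |x| < theta q n := abs_lt.2 hx
    calc q * |x| ^ (n - 1) < q * theta q n ^ (n - 1) := by
          gcongr
          omega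
      _ = 1 := mul_theta_pow_pred hq0 (by omega)

lemma abs_nqOrbitSeq_le {q : ℝ} (hq0 : 0 < q) (hq1 : q < 1) {n : ℕ} (hn : 1 ≤ n) {x : ℝ}
    (hx : x ∈ Iset q n) (k : ℕ) :
    |nqOrbitSeq q n x k| ≤ (q * |x| ^ (n - 1)) ^ k * |x| := by
  set r := q * |x| ^ (n - 1)
  have hr1 : r ≤ 1 := (mul_abs_pow_pred_lt_one hq0 hq1 hn hx).le
  induction k with
  | zero => simp
  | succ k ih =>
    set t := nqOrbitSeq q n x k
    have ht : |t| ≤ |x| := ih.trans (mul_le_of_le_one_left (abs_nonneg x)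
      (pow_le_one₀ (by positivity) hr1))
    calc |nqOrbitSeq q n x (k + 1)| = q * |t| ^ (n - 1) * |t| := by
          rw [nqOrbitSeq_succ, abs_mul, abs_of_pos hq0, abs_pow, mul_assoc, ← pow_succ,
            Nat.sub_add_cancel hn]
      _ ≤ r * (r ^ k * |x|) := by
          gcongr
          exact mul_le_mul_of_nonneg_left (pow_le_pow_left₀ (abs_nonneg t) ht _) hq0.le
      _ = r ^ (k + 1) * |x| := by ring

lemma tendsto_nqOrbitSeq {q : ℝ} (hq0 : 0 < q) (hq1 : q < 1) {n : ℕ} (hn : 1 ≤ n) {x : ℝ}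
    (hx : x ∈ Iset q n) :
    Tendsto (nqOrbitSeq q n x) atTop (𝓝 0) := by
  have hr := mul_abs_pow_pred_lt_one hq0 hq1 hn hx
  have hgeom : Tendsto (fun k => (q * |x| ^ (n - 1)) ^ k * |x|) atTop (𝓝 0) := by
    simpa using (tendsto_pow_atTop_nhds_zero_of_lt_one (by positivity) hr).mul_const |x|
  exact squeeze_zero_norm (abs_nqOrbitSeq_le hq0 hq1 hn hx) hgeom

lemma nqInt0_Dnq {q : ℝ} (hq0 : 0 < q) (hq1 : q < 1) {n : ℕ} (hn : Odd n) {F : ℝ → ℝ}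
    (hF : ContinuousAt F 0) {x : ℝ} (hx : x ∈ Iset q n)
    (hsum : Summable (nqSeq q n (Dnq q n F) x)) :
    nqInt0 q n (Dnq q n F) x = F x - F 0 := by
  have hpartial : Tendsto (fun K => ∑ k ∈ Finset.range K, nqSeq q n (Dnq q n F) x k)
      atTop (𝓝 (F 0 - F x)) := by
    simp only [nqSeq_Dnq hq0 hn, Finset.sum_range_sub (fun k => F (nqOrbitSeq q n x k)),
      nqOrbitSeq_zero]
    exact (hF.tendsto.comp (tendsto_nqOrbitSeq hq0 hq1 hn.pos hx)).sub_const (F x)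
  rw [nqInt0, tendsto_nhds_unique hsum.hasSum.tendsto_sum_nat hpartial, neg_sub]

lemma nqInt_Dnq {q : ℝ} (hq0 : 0 < q) (hq1 : q < 1) {n : ℕ} (hn : Odd n) {F : ℝ → ℝ}
    (hF : ContinuousAt F 0) {a b : ℝ} (ha : a ∈ Iset q n) (hb : b ∈ Iset q n)
    (hsa : Summable (nqSeq q n (Dnq q n F) a)) (hsb : Summable (nqSeq q n (Dnq q n F) b)) :
    nqInt q n (Dnq q n F) a b = F b - F a := by
  rw [nqInt, nqInt0_Dnq hq0 hq1 hn hF hb hsb, nqInt0_Dnq hq0 hq1 hn hF ha hsa]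
  ring

lemma nqSeq_add (q : ℝ) (n : ℕ) (g h : ℝ → ℝ) (x : ℝ) :
    nqSeq q n (g + h) x = nqSeq q n g x + nqSeq q n h x := by
  funext k
  simp only [nqSeq, Pi.add_apply]
  ring

lemma nqInt_add {q : ℝ} {n : ℕ} {g h : ℝ → ℝ} {a b : ℝ}
    (hga : Summable (nqSeq q n g a)) (hgb : Summable (nqSeq q n g b))
    (hha : Summable (nqSeq q n h a)) (hhb : Summable (nqSeq q n h b)) :
    nqInt q n (g + h) a b = nqInt q n g a b + nqInt q n h a b := by
  simp only [nqInt, nqInt0, nqSeq_add, Pi.add_apply, hga.tsum_add hha, hgb.tsum_add hhb]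
  ring

lemma nqSeq_congr {n : ℕ} (hn : 1 ≤ n) {q : ℝ} {g₁ g₂ : ℝ → ℝ} {x : ℝ}
    (h : ∀ t ∈ nqOrbit q n x, q * t ^ n ≠ t → g₁ t = g₂ t) :
    nqSeq q n g₁ x = nqSeq q n g₂ x := by
  funext k
  rw [nqSeq_eq hn, nqSeq_eq hn]
  by_cases hfix : q * nqOrbitSeq q n x k ^ n = nqOrbitSeq q n x k
  · simp [hfix]
  · rw [h _ (nqOrbitSeq_mem_nqOrbit q n x k) hfix]

lemma nqInt_congr {n : ℕ} (hn : 1 ≤ n) {q : ℝ} {g₁ g₂ : ℝ → ℝ} {a b : ℝ}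
    (h : ∀ t ∈ nqInterval q n a b, q * t ^ n ≠ t → g₁ t = g₂ t) :
    nqInt q n g₁ a b = nqInt q n g₂ a b := by
  unfold nqInt nqInt0
  rw [nqSeq_congr (x := a) hn fun t ht => h t (Or.inl (Or.inl ht)),
    nqSeq_congr (x := b) hn fun t ht => h t (Or.inl (Or.inr ht))]

lemma mul_pow_mem_nqInterval {n : ℕ} (hn : 1 ≤ n) {q a b t : ℝ}
    (ht : t ∈ nqInterval q n a b) : q * t ^ n ∈ nqInterval q n a b := by
  rcases ht with (⟨k, rfl⟩ | ⟨k, rfl⟩) | rfl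
  · exact Or.inl (Or.inl ⟨k + 1, nqOrbitSeq_succ q n a k⟩)
  · exact Or.inl (Or.inr ⟨k + 1, nqOrbitSeq_succ q n b k⟩)
  · exact Or.inr (by simp [Nat.one_le_iff_ne_zero.1 hn])

lemma Lfun_congr {q : ℝ} (hq0 : 0 < q) {n : ℕ} (hn : Odd n) {a b : ℝ}
    (f : ℝ → ℝ → ℝ → ℝ) {y₁ y₂ : ℝ → ℝ} (h : ∀ t ∈ nqInterval q n a b, y₁ t = y₂ t) :
    Lfun q n a b f y₁ = Lfun q n a b f y₂ := by
  refine nqInt_congr hn.pos fun t ht hfix => ?_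
  have hnext := h _ (mul_pow_mem_nqInterval hn.pos ht)
  simp only [Dnq_of_mul_pow_ne hq0 hn _ hfix, hnext, h t ht]

lemma nqInt_sub_nqInt_of_sub_eq_Dnq {q : ℝ} (hq0 : 0 < q) (hq1 : q < 1) {n : ℕ} (hn : Odd n)
    {a b : ℝ} (ha : a ∈ Iset q n) (hb : b ∈ Iset q n) {g gbar F : ℝ → ℝ}
    (hdiff : ∀ t ∈ nqInterval q n a b, g t - gbar t = Dnq q n F t) (hF : ContinuousAt F 0)
    (hFa : Summable (nqSeq q n (Dnq q n F) a)) (hFb : Summable (nqSeq q n (Dnq q n F) b))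
    (hgbara : Summable (nqSeq q n gbar a)) (hgbarb : Summable (nqSeq q n gbar b)) :
    nqInt q n g a b - nqInt q n gbar a b = F b - F a := by
  have hg : nqInt q n g a b = nqInt q n (gbar + Dnq q n F) a b :=
    nqInt_congr hn.pos fun t ht _ => by simp [← hdiff t ht]
  rw [hg, nqInt_add hgbara hgbarb hFa hFb, nqInt_Dnq hq0 hq1 hn hF ha hb hFa hFb]
  ring

end NQCalculus

open NQCalculus in
theorem stmt19_general (q : ℝ) (hq0 : 0 < q) (hq1 : q < 1) (n : ℕ) (hn : Odd n)
    (a b : ℝ) (ha : a ∈ Iset q n) (hb : b ∈ Iset q n)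
    (α β : ℝ) (f fbar : ℝ → ℝ → ℝ → ℝ) (z zbar : ℝ → ℝ → ℝ) (G : ℝ → ℝ → ℝ)
    (hinv2 : ∀ t ∈ nqInterval q n a b, ∀ v : ℝ, z t (zbar t v) = v)
    (hcorr2 : ∀ y : ℝ → ℝ, Emem q n a b y →
      Emem q n a b (fun t => zbar t (y t)))
    (hG : ∀ ybar : ℝ → ℝ, Emem q n a b ybar →
      ybar a = zbar a α → ybar b = zbar b β →
      (∀ t ∈ nqInterval q n a b,
        f t (z (q * t ^ n) (ybar (q * t ^ n))) (Dnq q n (fun τ => z τ (ybar τ)) t)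
            - fbar t (ybar (q * t ^ n)) (Dnq q n ybar t)
          = Dnq q n (fun τ => G τ (ybar τ)) t) ∧
      ContinuousAt (fun τ => G τ (ybar τ)) 0 ∧
      Summable (nqSeq q n (Dnq q n (fun τ => G τ (ybar τ))) a) ∧
      Summable (nqSeq q n (Dnq q n (fun τ => G τ (ybar τ))) b) ∧
      Summable (nqSeq q n (fun t => fbar t (ybar (q * t ^ n)) (Dnq q n ybar t)) a) ∧
      Summable (nqSeq q n (fun t => fbar t (ybar (q * t ^ n)) (Dnq q n ybar t)) b) ∧
      Summable (nqSeq q n (fun t =>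
        f t (z (q * t ^ n) (ybar (q * t ^ n)))
          (Dnq q n (fun τ => z τ (ybar τ)) t)) a) ∧
      Summable (nqSeq q n (fun t =>
        f t (z (q * t ^ n) (ybar (q * t ^ n)))
          (Dnq q n (fun τ => z τ (ybar τ)) t)) b)) :
    (∀ ybar : ℝ → ℝ, Emem q n a b ybar →
      ybar a = zbar a α → ybar b = zbar b β →
      Lfun q n a b f (fun t => z t (ybar t)) - Lfun q n a b fbar ybar
        = G b (zbar b β) - G a (zbar a α)) ∧
    (∀ ybarstar : ℝ → ℝ, Emem q n a b ybarstar →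
      ybarstar a = zbar a α → ybarstar b = zbar b β →
      ((∀ ybar : ℝ → ℝ, Emem q n a b ybar →
          ybar a = zbar a α → ybar b = zbar b β →
          Lfun q n a b fbar ybarstar ≤ Lfun q n a b fbar ybar) →
        ∀ y : ℝ → ℝ, Emem q n a b y → y a = α → y b = β →
          Lfun q n a b f (fun t => z t (ybarstar t)) ≤ Lfun q n a b f y) ∧
      ((∀ ybar : ℝ → ℝ, Emem q n a b ybar →
          ybar a = zbar a α → ybar b = zbar b β →
          Lfun q n a b fbar ybar ≤ Lfun q n a b fbar ybarstar) →
        ∀ y : ℝ → ℝ, Emem q n a b y → y a = α → y b = β →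
          Lfun q n a b f y ≤ Lfun q n a b f (fun t => z t (ybarstar t)))) := by
  have hdiff : ∀ ybar : ℝ → ℝ, Emem q n a b ybar → ybar a = zbar a α → ybar b = zbar b β →
      Lfun q n a b f (fun t => z t (ybar t)) - Lfun q n a b fbar ybar
        = G b (zbar b β) - G a (zbar a α) := by
    intro ybar hE hya hyb
    obtain ⟨hpt, hGc, hGa, hGb, hfa, hfb, -, -⟩ := hG ybar hE hya hyb
    rw [← hya, ← hyb]
    exact nqInt_sub_nqInt_of_sub_eq_Dnq hq0 hq1 hn ha hb hpt hGc hGa hGb hfa hfb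
  have htransport : ∀ y : ℝ → ℝ, Emem q n a b y → y a = α → y b = β →
      Lfun q n a b f y - Lfun q n a b fbar (fun t => zbar t (y t))
        = G b (zbar b β) - G a (zbar a α) := by
    intro y hE hya hyb
    rw [← Lfun_congr hq0 hn f fun t ht => hinv2 t ht (y t)]
    exact hdiff _ (hcorr2 y hE) (by rw [hya]) (by rw [hyb])
  refine ⟨hdiff, fun ys hE hya hyb => ⟨fun hmin y hEy hya' hyb' => ?_,
    fun hmax y hEy hya' hyb' => ?_⟩⟩
  · linarith [hdiff ys hE hya hyb, htransport y hEy hya' hyb',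
      hmin _ (hcorr2 y hEy) (by rw [hya']) (by rw [hyb'])]
  · linarith [hdiff ys hE hya hyb, htransport y hEy hya' hyb',
      hmax _ (hcorr2 y hEy) (by rw [hya']) (by rw [hyb'])]

theorem stmt19 (q : ℝ) (hq0 : 0 < q) (hq1 : q < 1) (n : ℕ) (hn : Odd n)
    (a b : ℝ) (ha : a ∈ Iset q n) (hb : b ∈ Iset q n) (hab : a < b)
    (α β : ℝ) (f fbar : ℝ → ℝ → ℝ → ℝ) (z zbar : ℝ → ℝ → ℝ) (G : ℝ → ℝ → ℝ)
    (hinv1 : ∀ t ∈ nqInterval q n a b, ∀ v : ℝ, zbar t (z t v) = v)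
    (hinv2 : ∀ t ∈ nqInterval q n a b, ∀ v : ℝ, z t (zbar t v) = v)
    (hcorr1 : ∀ ybar : ℝ → ℝ, Emem q n a b ybar →
      Emem q n a b (fun t => z t (ybar t)))
    (hcorr2 : ∀ y : ℝ → ℝ, Emem q n a b y →
      Emem q n a b (fun t => zbar t (y t)))
    (hG : ∀ ybar : ℝ → ℝ, Emem q n a b ybar →
      ybar a = zbar a α → ybar b = zbar b β →
      (∀ t ∈ nqInterval q n a b,
        f t (z (q * t ^ n) (ybar (q * t ^ n))) (Dnq q n (fun τ => z τ (ybar τ)) t)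
            - fbar t (ybar (q * t ^ n)) (Dnq q n ybar t)
          = Dnq q n (fun τ => G τ (ybar τ)) t) ∧
      ContinuousAt (fun τ => G τ (ybar τ)) 0 ∧
      Summable (nqSeq q n (Dnq q n (fun τ => G τ (ybar τ))) a) ∧
      Summable (nqSeq q n (Dnq q n (fun τ => G τ (ybar τ))) b) ∧
      Summable (nqSeq q n (fun t => fbar t (ybar (q * t ^ n)) (Dnq q n ybar t)) a) ∧
      Summable (nqSeq q n (fun t => fbar t (ybar (q * t ^ n)) (Dnq q n ybar t)) b) ∧
      Summable (nqSeq q n (fun t =>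
        f t (z (q * t ^ n) (ybar (q * t ^ n)))
          (Dnq q n (fun τ => z τ (ybar τ)) t)) a) ∧
      Summable (nqSeq q n (fun t =>
        f t (z (q * t ^ n) (ybar (q * t ^ n)))
          (Dnq q n (fun τ => z τ (ybar τ)) t)) b)) :
    (∀ ybar : ℝ → ℝ, Emem q n a b ybar →
      ybar a = zbar a α → ybar b = zbar b β →
      Lfun q n a b f (fun t => z t (ybar t)) - Lfun q n a b fbar ybar
        = G b (zbar b β) - G a (zbar a α)) ∧
    (∀ ybarstar : ℝ → ℝ, Emem q n a b ybarstar →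
      ybarstar a = zbar a α → ybarstar b = zbar b β →
      ((∀ ybar : ℝ → ℝ, Emem q n a b ybar →
          ybar a = zbar a α → ybar b = zbar b β →
          Lfun q n a b fbar ybarstar ≤ Lfun q n a b fbar ybar) →
        ∀ y : ℝ → ℝ, Emem q n a b y → y a = α → y b = β →
          Lfun q n a b f (fun t => z t (ybarstar t)) ≤ Lfun q n a b f y) ∧
      ((∀ ybar : ℝ → ℝ, Emem q n a b ybar →
          ybar a = zbar a α → ybar b = zbar b β →
          Lfun q n a b fbar ybar ≤ Lfun q n a b fbar ybarstar) →
        ∀ y : ℝ → ℝ, Emem q n a b y → y a = α → y b = β →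
          Lfun q n a b f y ≤ Lfun q n a b f (fun t => z t (ybarstar t)))) :=
  stmt19_general q hq0 hq1 n hn a b ha hb α β f fbar z zbar G hinv2 hcorr2 hG
end
end
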